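/- arXiv:2407.08364 — 2 statements merged into one kernel-verified Lean document; each statement's English description precedes it below -/
import Mathlib

section
/- Let f, f', g, g' : Fin n → ℝ and ε ≥ 0 satisfy |f(i) − f'(i)| ≤ ε and |g(i) − g'(i)| ≤ ε for all i. Then for every vertex v of the doubled graph G̃ one has |w̃_{f,g}(v) − w̃_{f',g'}(v)| ≤ ε, and for every edge e of G̃ one has |w̃_{f,g}(e) − w̃_{f',g'}(e)| ≤ ε; that is, under a sup-norm ε-perturbation of the pair of vertex functions, the filtration value of every vertex and every edge of the doubled graph changes by at most ε. -/
/-- Vertices of the doubled graph `G̃`: `A_i`, `A'_i` (for `i : Fin n`) and `O`. -/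
inductive DVert (n : ℕ) : Type
  | A : Fin n → DVert n
  | A' : Fin n → DVert n
  | O : DVert n

open DVert

/-- The relation generating the edges of the doubled graph `G̃`:
`A_iA_j` and `A'_iA'_j` for every edge `(i,j)` of `G`; `A_iA'_j` for every edge `(i,j)`
of `G` with `i < j`; and `O A_i` and `A_i A'_i` for every `i`. -/
def dRel {n : ℕ} (G : SimpleGraph (Fin n)) : DVert n → DVert n → Prop
  | .A i, .A j => G.Adj i j
  | .A' i, .A' j => G.Adj i j
  | .A i, .A' j => (G.Adj i j ∧ i < j) ∨ i = j
  | .O, .A _ => True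
  | _, _ => False

/-- The doubled graph `G̃`. -/
def doubled {n : ℕ} (G : SimpleGraph (Fin n)) : SimpleGraph (DVert n) :=
  SimpleGraph.fromRel (dRel G)

/-- `m₀ = min_i min (f i) (g i)`, the global minimum of `f` and `g`. -/
noncomputable def m0 {n : ℕ} (hn : 0 < n) (f g : Fin n → ℝ) : ℝ :=
  Finset.univ.inf' ⟨⟨0, hn⟩, Finset.mem_univ _⟩ (fun i => min (f i) (g i))

/-- The filtration value `w̃` on vertices of the doubled graph:
`w̃(A_i) = f i`, `w̃(A'_i) = min (f i) (g i)`, `w̃(O) = m₀`. -/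
noncomputable def wVert {n : ℕ} (hn : 0 < n) (f g : Fin n → ℝ) : DVert n → ℝ
  | .A i => f i
  | .A' i => min (f i) (g i)
  | .O => m0 hn f g

/-- The filtration value `w̃` on edges of the doubled graph, given by the two endpoints:
`w̃(A_iA_j) = max (f i) (f j)`, `w̃(A'_iA'_j) = min (max (f i) (f j)) (max (g i) (g j))`,
`w̃(A_iA'_j) = max (f i) (f j)` (so in particular `w̃(A_iA'_i) = f i`), `w̃(O A_i) = f i`. -/
noncomputable def wEdge {n : ℕ} (f g : Fin n → ℝ) : DVert n → DVert n → ℝ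
  | .A i, .A j => max (f i) (f j)
  | .A' i, .A' j => min (max (f i) (f j)) (max (g i) (g j))
  | .A i, .A' j => max (f i) (f j)
  | .A' i, .A j => max (f i) (f j)
  | .O, .A i => f i
  | .A i, .O => f i
  | _, _ => 0

/-! Every filtration value of `G̃` is built from `f` and `g` by `max`, `min` and a finite infimum,
each of which is 1-Lipschitz for the sup distance. -/

section Lipschitz

variable {α : Type*} [LinearOrder α] [AddCommGroup α] [IsOrderedAddMonoid α]

theorem abs_max_sub_max_le_of_abs_sub_le {a b c d e : α} (hac : |a - c| ≤ e)
    (hbd : |b - d| ≤ e) :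
    |max a b - max c d| ≤ e :=
  (abs_max_sub_max_le_max a b c d).trans (max_le hac hbd)

theorem abs_min_sub_min_le_of_abs_sub_le {a b c d e : α} (hac : |a - c| ≤ e)
    (hbd : |b - d| ≤ e) :
    |min a b - min c d| ≤ e :=
  (abs_min_sub_min_le_max a b c d).trans (max_le hac hbd)

theorem Finset.inf'_le_inf'_add {ι : Type*} {s : Finset ι} (hs : s.Nonempty)
    {F F' : ι → α} {e : α} (h : ∀ i ∈ s, F i ≤ F' i + e) :
    s.inf' hs F ≤ s.inf' hs F' + e := by
  rw [← sub_le_iff_le_add]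
  exact Finset.le_inf' hs F' fun i hi =>
    sub_le_iff_le_add.2 ((Finset.inf'_le F hi).trans (h i hi))

theorem Finset.abs_inf'_sub_inf'_le {ι : Type*} {s : Finset ι} (hs : s.Nonempty)
    {F F' : ι → α} {e : α} (h : ∀ i ∈ s, |F i - F' i| ≤ e) :
    |s.inf' hs F - s.inf' hs F'| ≤ e := by
  rw [abs_sub_le_iff, sub_le_iff_le_add', sub_le_iff_le_add']
  exact ⟨Finset.inf'_le_inf'_add hs fun i hi =>
      sub_le_iff_le_add'.1 (abs_sub_le_iff.1 (h i hi)).1,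
    Finset.inf'_le_inf'_add hs fun i hi => sub_le_iff_le_add'.1 (abs_sub_le_iff.1 (h i hi)).2⟩

end Lipschitz

section Perturbation

variable {n : ℕ} {f f' g g' : Fin n → ℝ} {ε : ℝ}

theorem abs_m0_sub_m0_le (hn : 0 < n) (hf : ∀ i, |f i - f' i| ≤ ε)
    (hg : ∀ i, |g i - g' i| ≤ ε) : |m0 hn f g - m0 hn f' g'| ≤ ε :=
  Finset.abs_inf'_sub_inf'_le _ fun i _ => abs_min_sub_min_le_of_abs_sub_le (hf i) (hg i)

theorem abs_wVert_sub_wVert_le (hn : 0 < n) (hf : ∀ i, |f i - f' i| ≤ ε)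
    (hg : ∀ i, |g i - g' i| ≤ ε) (v : DVert n) :
    |wVert hn f g v - wVert hn f' g' v| ≤ ε := by
  cases v with
  | A i => exact hf i
  | A' i => exact abs_min_sub_min_le_of_abs_sub_le (hf i) (hg i)
  | O => exact abs_m0_sub_m0_le hn hf hg

theorem abs_wEdge_sub_wEdge_le (G : SimpleGraph (Fin n)) (hf : ∀ i, |f i - f' i| ≤ ε)
    (hg : ∀ i, |g i - g' i| ≤ ε) {u v : DVert n} (huv : (doubled G).Adj u v) :
    |wEdge f g u v - wEdge f' g' u v| ≤ ε := by
  have hmax (i j : Fin n) := abs_max_sub_max_le_of_abs_sub_le (hf i) (hf j)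
  cases u <;> cases v <;> simp only [doubled, SimpleGraph.fromRel_adj, dRel] at huv
  all_goals first
    | exact abs_min_sub_min_le_of_abs_sub_le (hmax _ _)
        (abs_max_sub_max_le_of_abs_sub_le (hg _) (hg _))
    | exact hmax _ _
    | exact hf _
    -- `O O`, `O A'_i`, `A'_i O`: not edges, and `wEdge` is a junk `0` there
    | simp at huv

end Perturbation

theorem wTilde_perturbation_general {n : ℕ} (hn : 0 < n) (G : SimpleGraph (Fin n))
    (f f' g g' : Fin n → ℝ) (ε : ℝ)
    (hf : ∀ i, |f i - f' i| ≤ ε) (hg : ∀ i, |g i - g' i| ≤ ε) :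
    (∀ v : DVert n, |wVert hn f g v - wVert hn f' g' v| ≤ ε) ∧
    (∀ u v : DVert n, (doubled G).Adj u v →
      |wEdge f g u v - wEdge f' g' u v| ≤ ε) :=
  ⟨abs_wVert_sub_wVert_le hn hf hg, fun _ _ => abs_wEdge_sub_wEdge_le G hf hg⟩

theorem wTilde_perturbation {n : ℕ} (hn : 0 < n) (G : SimpleGraph (Fin n))
    (f f' g g' : Fin n → ℝ) (ε : ℝ) (hε : 0 ≤ ε)
    (hf : ∀ i, |f i - f' i| ≤ ε) (hg : ∀ i, |g i - g' i| ≤ ε) :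
    (∀ v : DVert n, |wVert hn f g v - wVert hn f' g' v| ≤ ε) ∧
    (∀ u v : DVert n, (doubled G).Adj u v →
      |wEdge f g u v - wEdge f' g' u v| ≤ ε) :=
  wTilde_perturbation_general hn G f f' g g' ε hf hg
end

section
/- If f = g (pointwise on Fin n), then for every ε ∈ ℝ the ε-sublevel subgraph of (G̃, w̃) is either empty or connected. -/
open DVert

theorem wEdge_comm {n : ℕ} (f g : Fin n → ℝ) (u v : DVert n) :
    wEdge f g u v = wEdge f g v u := by
  cases u <;> cases v <;> simp [wEdge, max_comm, min_comm]

/-- The `ε`-sublevel subgraph of `(G̃, w̃)`: its vertices are the vertices `v` of `G̃`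
with `w̃(v) ≤ ε`, and its edges are the edges `e` of `G̃` with `w̃(e) ≤ ε`. -/
def subl {n : ℕ} (hn : 0 < n) (G : SimpleGraph (Fin n))
    (f g : Fin n → ℝ) (ε : ℝ) :
    SimpleGraph {v : DVert n // wVert hn f g v ≤ ε} where
  Adj u v := (doubled G).Adj u.1 v.1 ∧ wEdge f g u.1 v.1 ≤ ε
  symm := ⟨fun u v h => ⟨h.1.symm, by rw [wEdge_comm]; exact h.2⟩⟩
  loopless := ⟨fun u h => (doubled G).loopless.irrefl u.1 h.1⟩

section Sublevel

variable {n : ℕ} (hn : 0 < n) (G : SimpleGraph (Fin n)) {f g : Fin n → ℝ} {ε : ℝ}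

theorem m0_le_wVert (v : DVert n) : m0 hn f g ≤ wVert hn f g v := by
  cases v with
  | A i => exact Finset.inf'_le_of_le _ (Finset.mem_univ i) (min_le_left _ _)
  | A' i => exact Finset.inf'_le _ (Finset.mem_univ i)
  | O => exact le_rfl

theorem wVert_O_le_of_nonempty (h : Nonempty {v : DVert n // wVert hn f g v ≤ ε}) :
    wVert hn f g O ≤ ε :=
  let ⟨⟨v, hv⟩⟩ := h
  (m0_le_wVert hn v).trans hv

theorem subl_adj_A_O {i : Fin n} (hi : f i ≤ ε) (hO : wVert hn f g O ≤ ε) :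
    (subl hn G f g ε).Adj ⟨A i, hi⟩ ⟨O, hO⟩ :=
  ⟨by simp [doubled, dRel], hi⟩

theorem subl_adj_A'_A {i : Fin n} (hi' : wVert hn f g (A' i) ≤ ε) (hi : f i ≤ ε) :
    (subl hn G f g ε).Adj ⟨A' i, hi'⟩ ⟨A i, hi⟩ :=
  ⟨by simp [doubled, dRel], by simpa [wEdge] using hi⟩

/-- When `f ≤ g`, the vertex `A'_i` enters the filtration together with `A_i` and the edge
`A_iA'_i`, so it is joined to `O` through `A_i`. -/
theorem subl_reachable_O (hfg : f ≤ g) (hO : wVert hn f g O ≤ ε)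
    (u : {v : DVert n // wVert hn f g v ≤ ε}) : (subl hn G f g ε).Reachable u ⟨O, hO⟩ := by
  obtain ⟨u, hu⟩ := u
  cases u with
  | A i => exact (subl_adj_A_O hn G hu hO).reachable
  | A' i =>
    have hi : f i ≤ ε := by simpa [wVert, min_eq_left (hfg i)] using hu
    exact (subl_adj_A'_A hn G hu hi).reachable.trans (subl_adj_A_O hn G hi hO).reachable
  | O => rfl

theorem subl_connected_of_le (hfg : f ≤ g) (h : Nonempty {v : DVert n // wVert hn f g v ≤ ε}) :
    (subl hn G f g ε).Connected := by
  have hO := wVert_O_le_of_nonempty hn h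
  exact (SimpleGraph.connected_iff_exists_forall_reachable _).2
    ⟨⟨O, hO⟩, fun u => (subl_reachable_O hn G hfg hO u).symm⟩

end Sublevel

theorem sublevel_empty_or_connected_of_eq {n : ℕ} (hn : 0 < n)
    (G : SimpleGraph (Fin n)) (f g : Fin n → ℝ) (hfg : f = g) (ε : ℝ) :
    IsEmpty {v : DVert n // wVert hn f g v ≤ ε} ∨ (subl hn G f g ε).Connected := by
  rw [or_iff_not_imp_left, not_isEmpty_iff]
  exact subl_connected_of_le hn G hfg.le
end
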